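/- Let d be even and s a positive integer with 2s ≤ d. For every ε, γ ∈ I^s \ {α, ω} and every pair x ∈ B_ε, y ∈ B_γ, the Hamming distance satisfies dist(x,y) ≤ min{ d - s - ⟨ε, γ⟩, d - s - ⟨ε̄, γ̄⟩ }, where ε̄, γ̄ denote antipodes. Equivalently, diam(B_ε, B_γ) ≤ min{ d - s - ⟨ε, γ⟩, d - s - ⟨ε̄, γ̄⟩ }. -/
import Mathlib


/-- Strings of length `d` over the alphabet `S = {0,1,*}`; `none` is the joker `*`. -/
abbrev JString (d : ℕ) := Fin d → Option Bool

/-- The distance between two strings over `{0,1,*}`: the number of positions where both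
entries are binary digits and they differ. -/
def jDist {d : ℕ} (u v : JString d) : ℕ :=
  (Finset.univ.filter fun i => ∃ a b : Bool, u i = some a ∧ v i = some b ∧ a ≠ b).card

/-- `nkd k d` is `n(k,d)`: the maximum size of a family of strings in `S^d` any two
distinct members of which are at distance at least `1` and at most `k`. -/
noncomputable def nkd (k d : ℕ) : ℕ :=
  sSup {m | ∃ F : Finset (JString d),
    (∀ u ∈ F, ∀ v ∈ F, u ≠ v → 1 ≤ jDist u v ∧ jDist u v ≤ k) ∧ F.card = m}

/-- The weight `|x|` of a binary string. -/
def wt {n : ℕ} (x : Fin n → Bool) : ℕ := (Finset.univ.filter fun i => x i = true).card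

/-- The inner product `⟨x,y⟩` of two binary strings. -/
def ip {n : ℕ} (x y : Fin n → Bool) : ℕ :=
  (Finset.univ.filter fun i => x i = true ∧ y i = true).card

/-- The antipode `x̄` of a binary string. -/
def antipode {n : ℕ} (x : Fin n → Bool) : Fin n → Bool := fun i => !(x i)

/-- `t(ε)` (0-based): the largest index at which `ε` differs from its last entry; for
nonconstant `ε` this is the unique (0-based) index `i` with `ε i ≠ ε (i+1) = ⋯ = ε (s-1)`. -/
noncomputable def tIdx {s : ℕ} (ε : Fin s → Bool) : ℕ :=
  sSup {i : ℕ | ∃ h : i < s, ∃ h' : s - 1 < s, ε ⟨i, h⟩ ≠ ε ⟨s - 1, h'⟩}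

/-- The set `A_ε = {ε_1} × ⋯ × {ε_{t(ε)}} × I^{s-1-t(ε)} ⊆ I^{s-1}`. -/
def Aset {s : ℕ} (ε : Fin s → Bool) : Set (Fin (s - 1) → Bool) :=
  {x | ∀ j : Fin (s - 1), (j : ℕ) ≤ tIdx ε →
    x j = ε ⟨(j : ℕ), Nat.lt_of_lt_of_le j.isLt (Nat.sub_le s 1)⟩}

/-- The sets `X_k ⊆ I^{d-s}`: `X_0 = {|x| ≤ d/2 - s}`, `X_k = {|x| = d/2 - s + k}` for
`0 < k < s`, and `X_s = {|x| ≥ d/2}`. -/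
def Xk (d s k : ℕ) : Set (Fin (d - s) → Bool) :=
  if k = 0 then {x | wt x ≤ d / 2 - s}
  else if k = s then {x | d / 2 ≤ wt x}
  else {x | wt x = d / 2 - s + k}

/-- The last `m` coordinates of a binary string of length `n` (junk values if `m > n`). -/
def suffix (m : ℕ) {n : ℕ} (x : Fin n → Bool) : Fin m → Bool :=
  fun j => if h : n - m + (j : ℕ) < n then x ⟨n - m + (j : ℕ), h⟩ else false

/-- The set `B_ε ⊆ I^{d-s}`: `B_α = X_0`, `B_ω = X_s`, and for `ε ∉ {α,ω}`,
`B_ε = X_{|ε|} ∩ (I^{d-2s+1} × A_ε)`, identifying `I^{d-s}` with `I^{d-2s+1} × I^{s-1}`. -/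
def Bset (d : ℕ) {s : ℕ} (ε : Fin s → Bool) : Set (Fin (d - s) → Bool) :=
  if ε = (fun _ => false) then Xk d s 0
  else if ε = (fun _ => true) then Xk d s s
  else Xk d s (wt ε) ∩ {x | suffix (s - 1) x ∈ Aset ε}

/-- Concatenation of a binary string of length `d - s` with a string over `{0,1,*}` of
length `s`, producing a string over `{0,1,*}` of length `d`. -/
def glue {d s : ℕ} (x : Fin (d - s) → Bool) (w : Fin s → Option Bool) : JString d :=
  fun i => if h : (i : ℕ) < d - s then some (x ⟨(i : ℕ), h⟩)
    else if h' : (i : ℕ) - (d - s) < s then w ⟨(i : ℕ) - (d - s), h'⟩ else none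

/-- The set `*^ε = *^{ε_1} × ⋯ × *^{ε_s} ⊆ S^s`, where `*^0 = {*}` and `*^1 = {0,1}`. -/
def starSet {s : ℕ} (ε : Fin s → Bool) : Set (Fin s → Option Bool) :=
  {w | ∀ j, if ε j = true then ∃ b : Bool, w j = some b else w j = none}

/-- The set `C_ε = B_ε × *^ε ⊆ S^d`. -/
def Cset (d : ℕ) {s : ℕ} (ε : Fin s → Bool) : Set (JString d) :=
  {u | ∃ x ∈ Bset d ε, ∃ w ∈ starSet ε, u = glue x w}

section Helpers
open Finset

lemma split_count {n : ℕ} (p q : Fin n → Prop) [DecidablePred p] [DecidablePred q] :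
    (univ.filter fun i => p i ∧ q i).card + (univ.filter fun i => p i ∧ ¬ q i).card
      = (univ.filter p).card := by
  rw [← Finset.filter_filter, ← Finset.filter_filter]
  exact Finset.card_filter_add_card_filter_not q

lemma shift_count {n s t base : ℕ} (hts : t < s) (hb : base + t < n)
    (P : Fin s → Prop) [DecidablePred P] (Q : Fin n → Prop) [DecidablePred Q]
    (hPQ : ∀ (j : ℕ) (hj : j ≤ t), (P ⟨j, by omega⟩ ↔ Q ⟨base + j, by omega⟩)) :
    (Finset.univ.filter fun j : Fin s => P j ∧ (j : ℕ) ≤ t).card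
      = (Finset.univ.filter fun i : Fin n => Q i ∧ base ≤ (i : ℕ) ∧ (i : ℕ) ≤ base + t).card := by
  refine Finset.card_bij' (fun j hj => (⟨base + (j : ℕ), by
      simp only [mem_filter] at hj; omega⟩ : Fin n))
    (fun i hi => (⟨(i : ℕ) - base, by simp only [mem_filter] at hi; omega⟩ : Fin s)) ?_ ?_ ?_ ?_
  · intro j hj
    simp only [mem_filter, mem_univ, true_and] at hj ⊢
    refine ⟨?_, by omega, by omega⟩
    have := (hPQ (j : ℕ) hj.2).mp
    have hje : (⟨(j : ℕ), by omega⟩ : Fin s) = j := by ext; rfl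
    rw [hje] at this
    exact this hj.1
  · intro i hi
    simp only [mem_filter, mem_univ, true_and] at hi ⊢
    refine ⟨?_, by omega⟩
    have h2 := (hPQ ((i : ℕ) - base) (by omega)).mpr
    have hie : (⟨base + ((i : ℕ) - base), by omega⟩ : Fin n) = i := by
      ext; simp only [Fin.val_mk]; omega
    rw [hie] at h2
    exact h2 hi.1
  · intro j hj; ext; simp only [mem_filter] at hj; simp
  · intro i hi; ext; simp only [mem_filter] at hi; simp; omega

lemma card_le_t {s t : ℕ} (h : t < s) :
    (Finset.univ.filter fun j : Fin s => (j : ℕ) ≤ t).card = t + 1 := by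
  have : (Finset.univ.filter fun j : Fin s => (j : ℕ) ≤ t) = Finset.Iic (⟨t, h⟩ : Fin s) := by
    ext j; simp [Fin.le_def]
  rw [this, Fin.card_Iic]

lemma wt_plus_antipode {n : ℕ} (x : Fin n → Bool) :
    wt (fun i => !(x i)) + wt x = n := by
  unfold wt
  have h1 := Finset.card_filter_add_card_filter_not (s := (univ : Finset (Fin n)))
    (fun i => x i = true)
  simp only [card_univ, Fintype.card_fin] at h1
  have : (univ.filter fun i => (!(x i)) = true) = (univ.filter fun i => ¬ (x i = true)) := by
    ext i; simp
  rw [this]; omega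

lemma wt_le {n : ℕ} (x : Fin n → Bool) : wt x ≤ n := by
  have := Finset.card_filter_le (univ : Finset (Fin n)) (fun i => x i = true)
  simpa [wt] using this

lemma core {n s t D : ℕ} (x y : Fin n → Bool) (ε γ : Fin s → Bool)
    (hts : t + 2 ≤ s) (hsn : s ≤ n) (hD : n + s = 2 * D)
    (hwx : wt x = D - s + wt ε) (hwy : wt y = D - s + wt γ)
    (hwεle : wt ε ≤ s) (hwγle : wt γ ≤ s)
    (hx : ∀ (j : ℕ) (hj : j ≤ t), x ⟨n - (s - 1) + j, by omega⟩ = ε ⟨j, by omega⟩)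
    (hy : ∀ (j : ℕ) (hj : j ≤ t), y ⟨n - (s - 1) + j, by omega⟩ = γ ⟨j, by omega⟩)
    (hε : ∀ j : Fin s, t < (j : ℕ) → ε j = ε ⟨s - 1, by omega⟩) :
    ip ε γ ≤ (univ.filter fun i : Fin n => x i = y i).card := by
  set base := n - (s - 1) with hbase
  have hbt : base + t < n := by omega
  -- splits over Fin s
  have hsplit_p := split_count (fun j : Fin s => ε j = true ∧ γ j = true)
    (fun j : Fin s => (j : ℕ) ≤ t)
  have hsplit_e := split_count (fun j : Fin s => ε j = true) (fun j : Fin s => (j : ℕ) ≤ t)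
  have hsplit_g := split_count (fun j : Fin s => γ j = true) (fun j : Fin s => (j : ℕ) ≤ t)
  -- splits over Fin n
  have hsplit_o := split_count (fun i : Fin n => x i = true ∧ y i = true)
    (fun i : Fin n => base ≤ (i : ℕ) ∧ (i : ℕ) ≤ base + t)
  have hsplit_x := split_count (fun i : Fin n => x i = true)
    (fun i : Fin n => base ≤ (i : ℕ) ∧ (i : ℕ) ≤ base + t)
  have hsplit_y := split_count (fun i : Fin n => y i = true)
    (fun i : Fin n => base ≤ (i : ℕ) ∧ (i : ℕ) ≤ base + t)
  -- shift identifications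
  have hcF : (univ.filter fun j : Fin s => (ε j = true ∧ γ j = true) ∧ (j : ℕ) ≤ t).card
      = (univ.filter fun i : Fin n =>
          (x i = true ∧ y i = true) ∧ base ≤ (i : ℕ) ∧ (i : ℕ) ≤ base + t).card := by
    refine shift_count (by omega) hbt _ _ (fun j hj => ?_)
    rw [hx j hj, hy j hj]
  have heF : (univ.filter fun j : Fin s => (ε j = true) ∧ (j : ℕ) ≤ t).card
      = (univ.filter fun i : Fin n => (x i = true) ∧ base ≤ (i : ℕ) ∧ (i : ℕ) ≤ base + t).card := by
    refine shift_count (by omega) hbt _ _ (fun j hj => ?_)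
    rw [hx j hj]
  have hgF : (univ.filter fun j : Fin s => (γ j = true) ∧ (j : ℕ) ≤ t).card
      = (univ.filter fun i : Fin n => (y i = true) ∧ base ≤ (i : ℕ) ∧ (i : ℕ) ≤ base + t).card := by
    refine shift_count (by omega) hbt _ _ (fun j hj => ?_)
    rw [hy j hj]
  -- common ones ≤ agreements
  have hagree : (univ.filter fun i : Fin n => x i = true ∧ y i = true).card
      ≤ (univ.filter fun i : Fin n => x i = y i).card := by
    apply Finset.card_le_card
    intro i hi
    simp only [mem_filter, mem_univ, true_and] at hi ⊢
    rw [hi.1, hi.2]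
  have hip : ip ε γ = (univ.filter fun j : Fin s => ε j = true ∧ γ j = true).card := rfl
  rcases (Bool.eq_false_or_eq_true (ε ⟨s - 1, by omega⟩)).symm with hlast | hlast
  · -- ε ends in 0: all common ones of ε,γ are in the forced region
    have hzero : (univ.filter fun j : Fin s => (ε j = true ∧ γ j = true) ∧ ¬ ((j : ℕ) ≤ t)).card
        = 0 := by
      rw [Finset.card_eq_zero, Finset.filter_eq_empty_iff]
      rintro j - ⟨⟨hj1, -⟩, hj2⟩
      rw [hε j (by omega), hlast] at hj1
      exact Bool.false_ne_true hj1
    omega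
  · -- ε ends in 1
    -- the high part of the common-ones count equals the high part of γ's ones
    have hε1 : ∀ j : Fin s, ¬ ((j : ℕ) ≤ t) → ε j = true := fun j hj =>
      (hε j (by omega)).trans hlast
    have hhigh : (univ.filter fun j : Fin s => (ε j = true ∧ γ j = true) ∧ ¬ ((j : ℕ) ≤ t))
        = (univ.filter fun j : Fin s => (γ j = true) ∧ ¬ ((j : ℕ) ≤ t)) := by
      ext j; simp only [mem_filter, mem_univ, true_and]
      constructor
      · rintro ⟨⟨-, h2⟩, h3⟩; exact ⟨h2, h3⟩
      · rintro ⟨h2, h3⟩; exact ⟨⟨hε1 j h3, h2⟩, h3⟩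
    have hεhigh : (univ.filter fun j : Fin s => (ε j = true) ∧ ¬ ((j : ℕ) ≤ t))
        = (univ.filter fun j : Fin s => ¬ ((j : ℕ) ≤ t)) := by
      ext j; simp only [mem_filter, mem_univ, true_and]
      exact ⟨fun h => h.2, fun h => ⟨hε1 j h, h⟩⟩
    have hcard_le := card_le_t (s := s) (t := t) (by omega)
    have hcard_gt : (univ.filter fun j : Fin s => ¬ ((j : ℕ) ≤ t)).card = s - (t + 1) := by
      have h1 := Finset.card_filter_add_card_filter_not
        (s := (univ : Finset (Fin s))) (fun j : Fin s => (j : ℕ) ≤ t)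
      simp only [card_univ, Fintype.card_fin] at h1
      omega
    -- inclusion-exclusion on the free region
    set A := univ.filter fun i : Fin n =>
      (x i = true) ∧ ¬ (base ≤ (i : ℕ) ∧ (i : ℕ) ≤ base + t) with hA
    set B := univ.filter fun i : Fin n =>
      (y i = true) ∧ ¬ (base ≤ (i : ℕ) ∧ (i : ℕ) ≤ base + t) with hB
    have hie := Finset.card_union_add_card_inter A B
    have hABeq : A ∩ B = univ.filter fun i : Fin n =>
        (x i = true ∧ y i = true) ∧ ¬ (base ≤ (i : ℕ) ∧ (i : ℕ) ≤ base + t) := by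
      ext i
      simp only [hA, hB, Finset.mem_inter, mem_filter, mem_univ, true_and]
      tauto
    have hsub : (A ∪ B).card ≤ (univ.filter fun i : Fin n =>
        ¬ (base ≤ (i : ℕ) ∧ (i : ℕ) ≤ base + t)).card := by
      apply Finset.card_le_card
      intro i hi
      simp only [hA, hB, Finset.mem_union, mem_filter, mem_univ, true_and] at hi ⊢
      tauto
    have hcardF : (univ.filter fun i : Fin n =>
        base ≤ (i : ℕ) ∧ (i : ℕ) ≤ base + t).card = t + 1 := by
      have : (univ.filter fun i : Fin n => base ≤ (i : ℕ) ∧ (i : ℕ) ≤ base + t)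
          = Finset.Icc (⟨base, by omega⟩ : Fin n) ⟨base + t, by omega⟩ := by
        ext i; simp [Fin.le_def]
      rw [this, Fin.card_Icc]
      simp only [Fin.val_mk]
      omega
    have hr : (univ.filter fun i : Fin n =>
        ¬ (base ≤ (i : ℕ) ∧ (i : ℕ) ≤ base + t)).card = n - (t + 1) := by
      have h1 := Finset.card_filter_add_card_filter_not
        (s := (univ : Finset (Fin n))) (fun i : Fin n => base ≤ (i : ℕ) ∧ (i : ℕ) ≤ base + t)
      simp only [card_univ, Fintype.card_fin] at h1
      omega
    rw [hABeq] at hie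
    rw [hhigh] at hsplit_p
    rw [hεhigh] at hsplit_e
    rw [hip]
    have hwx' : (univ.filter fun i : Fin n => x i = true).card
        = D - s + (univ.filter fun j : Fin s => ε j = true).card := hwx
    have hwy' : (univ.filter fun i : Fin n => y i = true).card
        = D - s + (univ.filter fun j : Fin s => γ j = true).card := hwy
    have hwεle' : (univ.filter fun j : Fin s => ε j = true).card ≤ s := hwεle
    have hwγle' : (univ.filter fun j : Fin s => γ j = true).card ≤ s := hwγle
    omega


lemma exTrue {s : ℕ} (ε : Fin s → Bool) (h : ε ≠ fun _ => false) : ∃ i, ε i = true := by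
  by_contra hc
  push_neg at hc
  exact h (funext fun i => by simpa using hc i)

lemma exFalse {s : ℕ} (ε : Fin s → Bool) (h : ε ≠ fun _ => true) : ∃ i, ε i = false := by
  by_contra hc
  push_neg at hc
  exact h (funext fun i => by simpa using hc i)

lemma two_le_s {s : ℕ} (ε : Fin s → Bool) (hεα : ε ≠ fun _ => false)
    (hεω : ε ≠ fun _ => true) : 2 ≤ s := by
  obtain ⟨i, hi⟩ := exTrue ε hεα
  obtain ⟨j, hj⟩ := exFalse ε hεω
  have hij : i ≠ j := by
    rintro rfl
    rw [hi] at hj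
    exact absurd hj (by simp)
  have h1 := i.isLt
  have h2 := j.isLt
  by_contra hc
  push_neg at hc
  exact hij (Fin.ext (by omega))

lemma wt_pos {s : ℕ} (ε : Fin s → Bool) (hεα : ε ≠ fun _ => false) : 0 < wt ε := by
  obtain ⟨i, hi⟩ := exTrue ε hεα
  exact Finset.card_pos.mpr ⟨i, by simp [hi]⟩

lemma wt_lt {s : ℕ} (ε : Fin s → Bool) (hεω : ε ≠ fun _ => true) : wt ε < s := by
  obtain ⟨j, hj⟩ := exFalse ε hεω
  have hsub : (Finset.univ.filter fun i => ε i = true) ⊆ Finset.univ.erase j := by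
    intro i hi
    simp only [Finset.mem_filter] at hi
    simp only [Finset.mem_erase, Finset.mem_univ, and_true]
    rintro rfl
    rw [hi.2] at hj
    exact absurd hj (by simp)
  have hcard := Finset.card_le_card hsub
  rw [Finset.card_erase_of_mem (Finset.mem_univ j)] at hcard
  simp only [Finset.card_univ, Fintype.card_fin] at hcard
  have hj' := j.isLt
  unfold wt
  omega

lemma tIdx_spec {s : ℕ} (ε : Fin s → Bool) (h2 : 2 ≤ s)
    (hεα : ε ≠ fun _ => false) (hεω : ε ≠ fun _ => true) :
    tIdx ε + 2 ≤ s ∧ ∀ j : Fin s, tIdx ε < (j : ℕ) → ε j = ε ⟨s - 1, by omega⟩ := by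
  have hslt : s - 1 < s := by omega
  set T := {i : ℕ | ∃ h : i < s, ∃ h' : s - 1 < s, ε ⟨i, h⟩ ≠ ε ⟨s - 1, h'⟩} with hT
  have htt : tIdx ε = sSup T := rfl
  have hne : T.Nonempty := by
    rcases Bool.eq_false_or_eq_true (ε ⟨s - 1, hslt⟩) with hl | hl
    · obtain ⟨i, hi⟩ := exFalse ε hεω
      refine ⟨(i : ℕ), i.isLt, hslt, ?_⟩
      simp only [Fin.eta]
      rw [hi, hl]
      simp
    · obtain ⟨i, hi⟩ := exTrue ε hεα
      refine ⟨(i : ℕ), i.isLt, hslt, ?_⟩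
      simp only [Fin.eta]
      rw [hi, hl]
      simp
  have hbdd : BddAbove T := ⟨s, fun i hi => by obtain ⟨h, -⟩ := hi; omega⟩
  have hub : ∀ i ∈ T, i ≤ s - 2 := by
    rintro i ⟨h, h', hne'⟩
    by_contra hc
    push_neg at hc
    have hieq : (⟨i, h⟩ : Fin s) = ⟨s - 1, h'⟩ := Fin.ext (by simp only [Fin.val_mk]; omega)
    rw [hieq] at hne'
    exact hne' rfl
  have hle : sSup T ≤ s - 2 := csSup_le hne hub
  refine ⟨by omega, ?_⟩
  intro j hj
  by_contra hc
  have hmem : (j : ℕ) ∈ T := ⟨j.isLt, hslt, by simpa [Fin.eta] using hc⟩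
  have := le_csSup hbdd hmem
  omega

lemma Bset_spec {d s : ℕ} (hs : 0 < s) (hsd : 2 * s ≤ d) (ε : Fin s → Bool)
    (hεα : ε ≠ fun _ => false) (hεω : ε ≠ fun _ => true) (ht2 : tIdx ε + 2 ≤ s)
    (x : Fin (d - s) → Bool) (hx : x ∈ Bset d ε) :
    wt x = d / 2 - s + wt ε ∧
      ∀ (j : ℕ) (hj : j ≤ tIdx ε),
        x ⟨(d - s) - (s - 1) + j, by omega⟩ = ε ⟨j, by omega⟩ := by
  unfold Bset at hx
  rw [if_neg hεα, if_neg hεω] at hx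
  obtain ⟨hx1, hx2⟩ := hx
  unfold Xk at hx1
  rw [if_neg (wt_pos ε hεα).ne', if_neg (wt_lt ε hεω).ne] at hx1
  refine ⟨hx1, ?_⟩
  intro j hj
  have hjs : j < s - 1 := by omega
  have h2 := hx2 ⟨j, hjs⟩ (by simpa using hj)
  unfold suffix at h2
  rw [dif_pos (by simp only [Fin.val_mk]; omega)] at h2
  simpa using h2

open Finset in
lemma key {n s D : ℕ} (x y : Fin n → Bool) (ε γ : Fin s → Bool)
    (hsn : s ≤ n) (hD : n + s = 2 * D)
    (htε : tIdx ε + 2 ≤ s) (htγ : tIdx γ + 2 ≤ s)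
    (hwx : wt x = D - s + wt ε) (hwy : wt y = D - s + wt γ)
    (hwεle : wt ε ≤ s) (hwγle : wt γ ≤ s)
    (hx : ∀ (j : ℕ) (hj : j ≤ tIdx ε), x ⟨n - (s - 1) + j, by omega⟩ = ε ⟨j, by omega⟩)
    (hy : ∀ (j : ℕ) (hj : j ≤ tIdx γ), y ⟨n - (s - 1) + j, by omega⟩ = γ ⟨j, by omega⟩)
    (hε : ∀ j : Fin s, tIdx ε < (j : ℕ) → ε j = ε ⟨s - 1, by omega⟩)
    (hγ : ∀ j : Fin s, tIdx γ < (j : ℕ) → γ j = γ ⟨s - 1, by omega⟩) :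
    ip ε γ ≤ (univ.filter fun i : Fin n => x i = y i).card := by
  rcases le_total (tIdx ε) (tIdx γ) with h | h
  · exact core x y ε γ htε hsn hD hwx hwy hwεle hwγle
      (fun j hj => hx j hj) (fun j hj => hy j (hj.trans h)) hε
  · have hcomm : (univ.filter fun i : Fin n => x i = y i)
        = (univ.filter fun i : Fin n => y i = x i) := by
      ext i; simp [eq_comm]
    have hsets : (univ.filter fun i : Fin s => ε i = true ∧ γ i = true)
        = (univ.filter fun i : Fin s => γ i = true ∧ ε i = true) := by
      ext i; simp [and_comm]
    have hipc : ip ε γ = ip γ ε := by unfold ip; rw [hsets]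
    rw [hipc, hcomm]
    exact core y x γ ε htγ hsn hD hwy hwx hwγle hwεle
      (fun j hj => hy j hj) (fun j hj => hx j (hj.trans h)) hγ

lemma tIdx_antipode {s : ℕ} (ε : Fin s → Bool) : tIdx (antipode ε) = tIdx ε := by
  have hset : {i : ℕ | ∃ h : i < s, ∃ h' : s - 1 < s, antipode ε ⟨i, h⟩ ≠ antipode ε ⟨s - 1, h'⟩}
      = {i : ℕ | ∃ h : i < s, ∃ h' : s - 1 < s, ε ⟨i, h⟩ ≠ ε ⟨s - 1, h'⟩} := by
    ext i
    constructor
    · rintro ⟨h, h', hn⟩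
      exact ⟨h, h', fun hc => hn (by simp only [antipode]; rw [hc])⟩
    · rintro ⟨h, h', hn⟩
      refine ⟨h, h', fun hc => hn ?_⟩
      simp only [antipode] at hc
      exact Bool.not_inj hc
  unfold tIdx
  rw [hset]

end Helpers

/-- Let `d` be even and `s` positive with `2s ≤ d`. For every
`ε, γ ∈ I^s ∖ {α, ω}` and every `x ∈ B_ε`, `y ∈ B_γ`, the Hamming distance satisfies
`dist(x,y) ≤ min (d - s - ⟨ε,γ⟩) (d - s - ⟨ε̄,γ̄⟩)`. -/
theorem Bset_diam (d s : ℕ) (hde : Even d) (hs : 0 < s) (hsd : 2 * s ≤ d)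
    (ε γ : Fin s → Bool)
    (hεα : ε ≠ fun _ => false) (hεω : ε ≠ fun _ => true)
    (hγα : γ ≠ fun _ => false) (hγω : γ ≠ fun _ => true) :
    ∀ x ∈ Bset d ε, ∀ y ∈ Bset d γ,
      hammingDist x y ≤ min (d - s - ip ε γ) (d - s - ip (antipode ε) (antipode γ)) := by
  intro x hx y hy
  have h2s : 2 ≤ s := two_le_s ε hεα hεω
  have hεt := tIdx_spec ε h2s hεα hεω
  have hγt := tIdx_spec γ h2s hγα hγω
  obtain ⟨k, hk⟩ := hde
  have hεα' : antipode ε ≠ fun _ => false := by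
    intro h
    exact hεω (funext fun i => by simpa [antipode] using congrFun h i)
  have hBx := Bset_spec hs hsd ε hεα hεω hεt.1 x hx
  have hBy := Bset_spec hs hsd γ hγα hγω hγt.1 y hy
  have hwεlt := wt_lt ε hεω
  have hwγlt := wt_lt γ hγω
  have hwεpos := wt_pos ε hεα
  have hwγpos := wt_pos γ hγα
  -- bound 1
  have hk1 : ip ε γ ≤ (Finset.univ.filter fun i : Fin (d - s) => x i = y i).card :=
    key (D := d / 2) x y ε γ (by omega) (by omega) hεt.1 hγt.1 hBx.1 hBy.1 (by omega) (by omega)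
      hBx.2 hBy.2 hεt.2 hγt.2
  -- bound 2, via antipodes
  have hwax : wt (antipode x) + wt x = d - s := wt_plus_antipode x
  have hway : wt (antipode y) + wt y = d - s := wt_plus_antipode y
  have hwaε : wt (antipode ε) + wt ε = s := wt_plus_antipode ε
  have hwaγ : wt (antipode γ) + wt γ = s := wt_plus_antipode γ
  have htaε : tIdx (antipode ε) + 2 ≤ s := by rw [tIdx_antipode]; exact hεt.1
  have htaγ : tIdx (antipode γ) + 2 ≤ s := by rw [tIdx_antipode]; exact hγt.1
  have haxf : ∀ (j : ℕ) (hj : j ≤ tIdx (antipode ε)),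
      antipode x ⟨(d - s) - (s - 1) + j, by omega⟩ = antipode ε ⟨j, by omega⟩ := by
    intro j hj
    rw [tIdx_antipode] at hj
    simp only [antipode]
    rw [hBx.2 j hj]
  have hayf : ∀ (j : ℕ) (hj : j ≤ tIdx (antipode γ)),
      antipode y ⟨(d - s) - (s - 1) + j, by omega⟩ = antipode γ ⟨j, by omega⟩ := by
    intro j hj
    rw [tIdx_antipode] at hj
    simp only [antipode]
    rw [hBy.2 j hj]
  have haε : ∀ j : Fin s, tIdx (antipode ε) < (j : ℕ) →
      antipode ε j = antipode ε ⟨s - 1, by omega⟩ := by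
    intro j hj
    rw [tIdx_antipode] at hj
    simp only [antipode]
    rw [hεt.2 j hj]
  have haγ : ∀ j : Fin s, tIdx (antipode γ) < (j : ℕ) →
      antipode γ j = antipode γ ⟨s - 1, by omega⟩ := by
    intro j hj
    rw [tIdx_antipode] at hj
    simp only [antipode]
    rw [hγt.2 j hj]
  have hk2 : ip (antipode ε) (antipode γ)
      ≤ (Finset.univ.filter fun i : Fin (d - s) => antipode x i = antipode y i).card :=
    key (D := d / 2) (antipode x) (antipode y) (antipode ε) (antipode γ) (by omega) (by omega)
      htaε htaγ (by omega) (by omega) (by omega) (by omega) haxf hayf haε haγ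
  have heq : (Finset.univ.filter fun i : Fin (d - s) => antipode x i = antipode y i)
      = (Finset.univ.filter fun i : Fin (d - s) => x i = y i) := by
    ext i; simp [antipode]
  rw [heq] at hk2
  -- relate hammingDist to the agreement count
  have hsum := Finset.card_filter_add_card_filter_not
    (s := (Finset.univ : Finset (Fin (d - s)))) (fun i => x i = y i)
  simp only [Finset.card_univ, Fintype.card_fin] at hsum
  have hdist : hammingDist x y
      = (Finset.univ.filter fun i : Fin (d - s) => ¬ (x i = y i)).card := rfl
  rw [hdist]
  omega
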